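/- arXiv:1901.11026 — 5 statements merged into one kernel-verified Lean document; each statement's English description precedes it below -/
import Mathlib

section
/- Conversely, every well-ordered sequence j ∈ Ī^{ᾱ} with ᾱ = φ(α) for some α ∈ Q_I⁺ is of the form φ(i) for a unique i ∈ I^α. That is, φ restricts to a bijection from I^α onto the set of well-ordered sequences in Ī^{ᾱ}. -/
def phiL {I0 I1 : Type} (l : List (I0 ⊕ I1)) : List (I0 ⊕ I1 ⊕ I1) :=
  l.flatMap fun v =>
    match v with
    | Sum.inl a => [Sum.inl a]
    | Sum.inr b => [Sum.inr (Sum.inl b), Sum.inr (Sum.inr b)]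

def wellOrderedL {I0 I1 : Type} (l : List (I0 ⊕ I1 ⊕ I1)) : Prop :=
  ∀ (a : ℕ) (i1 : I1), l[a]? = some (Sum.inr (Sum.inl i1)) →
    l[a + 1]? = some (Sum.inr (Sum.inr i1))

instance sumLawfulBEq {α β : Type} [BEq α] [BEq β] [LawfulBEq α] [LawfulBEq β] :
    LawfulBEq (α ⊕ β) where
  eq_of_beq {a b} h := by
    cases a <;> cases b <;> simp_all
      [show ∀ (x y : α), ((Sum.inl x : α ⊕ β) == Sum.inl y) = (x == y) from fun _ _ => rfl,
       show ∀ (x y : β), ((Sum.inr x : α ⊕ β) == Sum.inr y) = (x == y) from fun _ _ => rfl,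
       show ∀ (x : α) (y : β), ((Sum.inl x : α ⊕ β) == Sum.inr y) = false from fun _ _ => rfl,
       show ∀ (x : β) (y : α), ((Sum.inr x : α ⊕ β) == Sum.inl y) = false from fun _ _ => rfl]
  rfl {a} := by
    cases a <;> simp
      [show ∀ (x y : α), ((Sum.inl x : α ⊕ β) == Sum.inl y) = (x == y) from fun _ _ => rfl,
       show ∀ (x y : β), ((Sum.inr x : α ⊕ β) == Sum.inr y) = (x == y) from fun _ _ => rfl]

lemma phiL_nil {I0 I1 : Type} : phiL ([] : List (I0 ⊕ I1)) = [] := rfl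

lemma phiL_cons_inl {I0 I1 : Type} (a : I0) (t : List (I0 ⊕ I1)) :
    phiL (Sum.inl a :: t) = Sum.inl a :: phiL t := rfl

lemma phiL_cons_inr {I0 I1 : Type} (b : I1) (t : List (I0 ⊕ I1)) :
    phiL (Sum.inr b :: t) =
      Sum.inr (Sum.inl b) :: Sum.inr (Sum.inr b) :: phiL t := rfl

lemma phiL_inj {I0 I1 : Type} :
    ∀ i i' : List (I0 ⊕ I1), phiL i = phiL i' → i = i' := by
  intro i
  induction i with
  | nil =>
    intro i' h
    cases i' with
    | nil => rfl
    | cons x t =>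
      cases x <;> simp [phiL_nil, phiL_cons_inl, phiL_cons_inr] at h
  | cons x t ih =>
    intro i' h
    cases i' with
    | nil => cases x <;> simp [phiL_nil, phiL_cons_inl, phiL_cons_inr] at h
    | cons y t' =>
      cases x <;> cases y <;>
        simp [phiL_cons_inl, phiL_cons_inr] at h
      · exact by rw [h.1, ih _ h.2]
      · exact by rw [h.1, ih _ h.2]

lemma tail_wo {I0 I1 : Type} {x : I0 ⊕ I1 ⊕ I1} {t : List (I0 ⊕ I1 ⊕ I1)}
    (h : wellOrderedL (x :: t)) : wellOrderedL t := by
  intro a b hb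
  have := h (a + 1) b (by simpa using hb)
  simpa using this

lemma countLe {I0 I1 : Type} [DecidableEq I0] [DecidableEq I1] :
    ∀ j : List (I0 ⊕ I1 ⊕ I1), wellOrderedL j → ∀ b : I1,
      j.count (Sum.inr (Sum.inl b)) ≤ j.count (Sum.inr (Sum.inr b))
  | [], _, b => by simp
  | (Sum.inl a :: t), h, b => by
    have := countLe t (tail_wo h) b
    simpa [List.count_cons] using this
  | (Sum.inr (Sum.inr b') :: t), h, b => by
    have := countLe t (tail_wo h) b
    simp only [List.count_cons]
    by_cases hb : b' = b <;> simp [hb, beq_iff_eq] <;> omega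
  | (Sum.inr (Sum.inl b') :: t), h, b => by
    have h1 : t[0]? = some (Sum.inr (Sum.inr b')) := by
      have := h 0 b' (by simp)
      simpa using this
    cases t with
    | nil => simp at h1
    | cons y t' =>
      have hy : y = Sum.inr (Sum.inr b') := by simpa using h1
      subst hy
      have := countLe t' (tail_wo (tail_wo h)) b
      simp only [List.count_cons]
      by_cases hb : b' = b <;> simp [hb, beq_iff_eq] <;> omega
  termination_by j => j.length

lemma exL {I0 I1 : Type} [DecidableEq I0] [DecidableEq I1] :
    ∀ j : List (I0 ⊕ I1 ⊕ I1), wellOrderedL j →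
      (∀ b : I1, j.count (Sum.inr (Sum.inl b)) = j.count (Sum.inr (Sum.inr b))) →
      ∃ i : List (I0 ⊕ I1), phiL i = j
  | [], _, _ => ⟨[], rfl⟩
  | (Sum.inl a :: t), h, hc => by
    obtain ⟨i, hi⟩ := exL t (tail_wo h) (fun b => by
      have := hc b
      simpa [List.count_cons] using this)
    exact ⟨Sum.inl a :: i, by rw [phiL_cons_inl, hi]⟩
  | (Sum.inr (Sum.inr b') :: t), h, hc => by
    exfalso
    have hle := countLe t (tail_wo h) b'
    have := hc b'
    simp [List.count_cons, beq_iff_eq] at this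
    omega
  | (Sum.inr (Sum.inl b') :: t), h, hc => by
    have h1 : t[0]? = some (Sum.inr (Sum.inr b')) := by
      have := h 0 b' (by simp)
      simpa using this
    cases t with
    | nil => simp at h1
    | cons y t' =>
      have hy : y = Sum.inr (Sum.inr b') := by simpa using h1
      subst hy
      obtain ⟨i, hi⟩ := exL t' (tail_wo (tail_wo h)) (fun b => by
        have := hc b
        by_cases hb : b' = b <;> simp [hb, List.count_cons, beq_iff_eq] at this ⊢ <;> omega)
      exact ⟨Sum.inr b' :: i, by rw [phiL_cons_inr, hi]⟩
  termination_by j => j.length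

/-- every well-ordered sequence j whose dimension vector is of the
form φ(α) (i.e. for each i ∈ I₁ the number of occurrences of i¹ equals that of
i²) is of the form φ(i) for a unique i; that is, φ restricts to a bijection from
I^α onto the well-ordered sequences of Ī^{φ(α)}. -/
theorem stmt9 (I0 I1 : Type) [DecidableEq I0] [DecidableEq I1]
    (j : List (I0 ⊕ I1 ⊕ I1)) (hwo : wellOrderedL j)
    (hcount : ∀ i1 : I1,
      j.count (Sum.inr (Sum.inl i1)) = j.count (Sum.inr (Sum.inr i1))) :
    ∃! i : List (I0 ⊕ I1), phiL i = j := by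
  obtain ⟨i, hi⟩ := exL j hwo hcount
  exact ⟨i, hi, fun i' hi' => phiL_inj i' i (hi'.trans hi.symm)⟩
end

section
/- Let i' = φ(i) and j' = φ(j) for i, j ∈ I^α, and let S_{i',j'} = {w ∈ 𝔖_{d̄} : w(i') = j'} where d̄ = |ᾱ| and w acts on sequences by permuting positions. Call w ∈ S_{i',j'} balanced if w(a+1) = w(a)+1 for every index a with i'_a ∈ Ī₁. Then there is a unique map u : S_{i,j} → S_{i',j'} such that for each w̃ ∈ S_{i,j}, u(w̃) is balanced and satisfies: for all r,t ∈ [1,d], w̃(r) < w̃(t) if and only if u(w̃)(r') < u(w̃)(t'), where r' denotes the position in φ(i) of the first letter of the block φ(i_r). Moreover, u is a bijection onto the set of balanced permutations in S_{i',j'}. -/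
/-- `SeqRel iL jL w` says w ∈ 𝔖_{iL,jL}, i.e. w(iL) = jL:
jL at position w(a) equals iL at position a. -/
def SeqRel {V : Type} (iL jL : List V) (w : Equiv.Perm (Fin iL.length)) : Prop :=
  ∀ a : Fin iL.length, jL[(w a).val]? = iL[a.val]?

/-- A permutation of the doubled index set is balanced if it sends each doubled
block (positions a, a+1 with the a-th letter of φ(iL) in Ī₁) to consecutive
positions. -/
def BalancedP {I0 I1 : Type} (iL : List (I0 ⊕ I1))
    (w : Equiv.Perm (Fin (phiL iL).length)) : Prop :=
  ∀ a b : Fin (phiL iL).length,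
    (∃ i1 : I1, (phiL iL)[a.val]? = some (Sum.inr (Sum.inl i1))) →
    b.val = a.val + 1 → (w b).val = (w a).val + 1

/-- The defining property of the map u : 𝔖_{i,j} → 𝔖_{i',j'}: each u(w̃) is
balanced, and w̃(r) < w̃(t) iff u(w̃)(r') < u(w̃)(t') where r' is the starting
position of the r-th block of φ(iL). -/
def Pmap {I0 I1 : Type} (iL jL : List (I0 ⊕ I1))
    (u : {w : Equiv.Perm (Fin iL.length) // SeqRel iL jL w} →
         {w : Equiv.Perm (Fin (phiL iL).length) // SeqRel (phiL iL) (phiL jL) w}) : Prop :=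
  ∀ wt, BalancedP iL (u wt).val ∧
    ∀ (r t : Fin iL.length) (r' t' : Fin (phiL iL).length),
      (r' : ℕ) = (phiL (iL.take r.val)).length →
      (t' : ℕ) = (phiL (iL.take t.val)).length →
      (wt.val r < wt.val t ↔ (u wt).val r' < (u wt).val t')

namespace Stmt10Aux

variable {I0 I1 : Type}

def blk : (I0 ⊕ I1) → List (I0 ⊕ I1 ⊕ I1)
  | .inl a => [.inl a]
  | .inr b => [.inr (.inl b), .inr (.inr b)]

lemma phiL_nil : phiL ([] : List (I0 ⊕ I1)) = [] := rfl

lemma phiL_eq (l : List (I0 ⊕ I1)) : phiL l = l.flatMap blk := by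
  induction l with
  | nil => rfl
  | cons v tl ih =>
    show (match v with
      | Sum.inl a => [Sum.inl a]
      | Sum.inr b => [Sum.inr (Sum.inl b), Sum.inr (Sum.inr b)]) ++ phiL tl = blk v ++ tl.flatMap blk
    rw [ih]; cases v <;> rfl

lemma phiL_cons (v : I0 ⊕ I1) (l : List (I0 ⊕ I1)) :
    phiL (v :: l) = blk v ++ phiL l := by
  simp [phiL_eq]

lemma phiL_append (l1 l2 : List (I0 ⊕ I1)) :
    phiL (l1 ++ l2) = phiL l1 ++ phiL l2 := by
  simp [phiL_eq]

lemma one_le_blk (v : I0 ⊕ I1) : 1 ≤ (blk v).length := by cases v <;> simp [blk]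

lemma blk_le_two (v : I0 ⊕ I1) : (blk v).length ≤ 2 := by cases v <;> simp [blk]

/-- start position of the r-th block in the doubled word -/
def st (l : List (I0 ⊕ I1)) (r : ℕ) : ℕ := (phiL (l.take r)).length

lemma st_succ (l : List (I0 ⊕ I1)) {r : ℕ} (hr : r < l.length) :
    st l (r + 1) = st l r + (blk l[r]).length := by
  unfold st
  rw [List.take_succ, phiL_append, List.getElem?_eq_getElem hr]
  simp [phiL_cons, phiL_nil]

lemma st_mono (l : List (I0 ⊕ I1)) : Monotone (st l) := by
  apply monotone_nat_of_le_succ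
  intro r
  by_cases hr : r < l.length
  · rw [st_succ l hr]; omega
  · unfold st
    rw [List.take_of_length_le (by omega), List.take_of_length_le (by omega)]

lemma st_length (l : List (I0 ⊕ I1)) : st l l.length = (phiL l).length := by
  unfold st; rw [List.take_length]

lemma st_add_le {l : List (I0 ⊕ I1)} {r : ℕ} (hr : r < l.length) :
    st l r + (blk l[r]).length ≤ (phiL l).length := by
  rw [← st_succ l hr, ← st_length l]
  exact st_mono l (by omega)

lemma st_block_le {l : List (I0 ⊕ I1)} {r t : ℕ} (hr : r < l.length) (hrt : r < t) :
    st l r + (blk l[r]).length ≤ st l t := by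
  rw [← st_succ l hr]
  exact st_mono l (by omega)

lemma st_lt_total {l : List (I0 ⊕ I1)} {r : ℕ} (hr : r < l.length) :
    st l r < (phiL l).length := by
  have h1 := st_add_le hr
  have h2 := one_le_blk (l[r])
  omega

lemma st_add_lt_iff {l : List (I0 ⊕ I1)} {r t k m : ℕ}
    (hr : r < l.length) (ht : t < l.length)
    (hk : k < (blk l[r]).length) (hm : m < (blk l[t]).length) :
    st l r + k < st l t + m ↔ (r < t ∨ (r = t ∧ k < m)) := by
  constructor
  · intro h
    rcases lt_trichotomy r t with h' | h' | h'
    · exact Or.inl h'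
    · subst h'; exact Or.inr ⟨rfl, by omega⟩
    · exfalso
      have := st_block_le ht h'
      omega
  · rintro (h' | ⟨rfl, h'⟩)
    · have := st_block_le hr h'
      omega
    · omega

lemma st_lt_st_iff {l : List (I0 ⊕ I1)} {r t : ℕ}
    (hr : r < l.length) (ht : t < l.length) :
    st l r < st l t ↔ r < t := by
  have := st_add_lt_iff hr ht (one_le_blk l[r]) (one_le_blk l[t])
  simpa using this

lemma dec_unique {l : List (I0 ⊕ I1)} {r t k m : ℕ}
    (hr : r < l.length) (ht : t < l.length)
    (hk : k < (blk l[r]).length) (hm : m < (blk l[t]).length)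
    (h : st l r + k = st l t + m) : r = t ∧ k = m := by
  have h1 := st_add_lt_iff hr ht hk hm
  have h2 := st_add_lt_iff ht hr hm hk
  rcases lt_trichotomy r t with h' | h' | h'
  · have := h1.mpr (Or.inl h'); omega
  · subst h'; exact ⟨rfl, by omega⟩
  · have := h2.mpr (Or.inl h'); omega

lemma getElem?_phiL {l : List (I0 ⊕ I1)} {r : ℕ} (hr : r < l.length) {k : ℕ}
    (hk : k < (blk l[r]).length) :
    (phiL l)[st l r + k]? = (blk l[r])[k]? := by
  have hl : phiL l = phiL (l.take r) ++ (blk l[r] ++ phiL (l.drop (r + 1))) := by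
    conv_lhs => rw [← List.take_append_drop r l, List.drop_eq_getElem_cons hr,
      phiL_append, phiL_cons]
  rw [hl, List.getElem?_append_right (by unfold st; omega)]
  have : st l r + k - (phiL (l.take r)).length = k := by unfold st; omega
  rw [this, List.getElem?_append_left hk]

lemma exists_dec (l : List (I0 ⊕ I1)) : ∀ a : ℕ, a < (phiL l).length →
    ∃ p : Fin l.length × ℕ, p.2 < (blk (l.get p.1)).length ∧ a = st l p.1.val + p.2 := by
  induction l with
  | nil => intro a ha; simp [phiL] at ha
  | cons v tl ih =>
    intro a ha
    rw [phiL_cons, List.length_append] at ha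
    by_cases h : a < (blk v).length
    · exact ⟨(⟨0, by simp⟩, a), by simpa [blk] using h, by simp [st, phiL_nil]⟩
    · obtain ⟨⟨r, k⟩, hk, heq⟩ := ih (a - (blk v).length) (by omega)
      simp only at hk heq
      refine ⟨(⟨r.val + 1, by simp⟩, k), by simpa using hk, ?_⟩
      have hst : st (v :: tl) (r.val + 1) = (blk v).length + st tl r.val := by
        unfold st
        rw [List.take_succ_cons, phiL_cons, List.length_append]
      simp only [hst]
      omega

lemma blk_head_match {u v : I0 ⊕ I1} {m : ℕ}
    (h : (blk u)[m]? = (blk v)[0]?) : u = v ∧ m = 0 := by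
  rcases u with a | b <;> rcases v with a' | b' <;> rcases m with _ | _ | m <;>
    simp_all [blk]

lemma blk_inr_inl {v : I0 ⊕ I1} {k : ℕ} {i1 : I1}
    (h : (blk v)[k]? = some (.inr (.inl i1))) : v = .inr i1 ∧ k = 0 := by
  rcases v with a | b <;> rcases k with _ | _ | k <;> simp_all [blk]

/-- block decomposition of a position in the doubled word -/
noncomputable def decP (l : List (I0 ⊕ I1)) (a : ℕ) (ha : a < (phiL l).length) :
    Fin l.length × ℕ := (exists_dec l a ha).choose

lemma decP_spec (l : List (I0 ⊕ I1)) (a : ℕ) (ha : a < (phiL l).length) :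
    (decP l a ha).2 < (blk (l.get (decP l a ha).1)).length ∧
      a = st l (decP l a ha).1.val + (decP l a ha).2 :=
  (exists_dec l a ha).choose_spec

lemma decP_eq {l : List (I0 ⊕ I1)} {a : ℕ} {ha : a < (phiL l).length}
    {r : Fin l.length} {k : ℕ} (hk : k < (blk (l.get r)).length)
    (heq : a = st l r.val + k) : decP l a ha = (r, k) := by
  obtain ⟨h1, h2⟩ := decP_spec l a ha
  have := dec_unique (l := l) (decP l a ha).1.isLt r.isLt h1 hk (by omega)
  obtain ⟨hrt, hkm⟩ := this
  have : (decP l a ha).1 = r := Fin.ext hrt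
  rw [Prod.ext_iff]
  exact ⟨this, hkm⟩

lemma phiL_length_perm {iL jL : List (I0 ⊕ I1)} (hperm : iL.Perm jL) :
    (phiL jL).length = (phiL iL).length := by
  rw [phiL_eq, phiL_eq, List.length_flatMap, List.length_flatMap]
  exact (hperm.map _).sum_eq.symm

section Main

variable {iL jL : List (I0 ⊕ I1)}

lemma seqrel_get (hlen : jL.length = iL.length) {w : Equiv.Perm (Fin iL.length)}
    (hw : SeqRel iL jL w) (r : Fin iL.length) :
    jL[(w r).val]'(by rw [hlen]; exact (w r).isLt) = iL.get r := by
  have h := hw r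
  rw [List.getElem?_eq_getElem (by rw [hlen]; exact (w r).isLt),
    List.getElem?_eq_getElem r.isLt] at h
  exact Option.some.inj h

/-- The candidate map on positions. -/
noncomputable def Ffun (hlen : jL.length = iL.length)
    (hDJ : (phiL jL).length = (phiL iL).length)
    (w : Equiv.Perm (Fin iL.length)) (hw : SeqRel iL jL w)
    (a : Fin (phiL iL).length) : Fin (phiL iL).length :=
  ⟨st jL (w (decP iL a.val a.isLt).1).val + (decP iL a.val a.isLt).2, by
    set p := decP iL a.val a.isLt with hp
    obtain ⟨h1, _⟩ := decP_spec iL a.val a.isLt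
    rw [← hp] at h1
    have hs : (w p.1).val < jL.length := by rw [hlen]; exact (w p.1).isLt
    have hel := seqrel_get hlen hw p.1
    have hle := st_add_le (l := jL) hs
    rw [hel] at hle
    omega⟩

lemma Ffun_val (hlen : jL.length = iL.length)
    (hDJ : (phiL jL).length = (phiL iL).length)
    (w : Equiv.Perm (Fin iL.length)) (hw : SeqRel iL jL w)
    (r : Fin iL.length) (k : ℕ) (hk : k < (blk (iL.get r)).length)
    (ha : st iL r.val + k < (phiL iL).length) :
    (Ffun hlen hDJ w hw ⟨st iL r.val + k, ha⟩).val = st jL (w r).val + k := by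
  unfold Ffun
  simp only [decP_eq hk rfl]

lemma Ffun_inj (hlen : jL.length = iL.length)
    (hDJ : (phiL jL).length = (phiL iL).length)
    (w : Equiv.Perm (Fin iL.length)) (hw : SeqRel iL jL w) :
    Function.Injective (Ffun hlen hDJ w hw) := by
  intro a b hab
  obtain ⟨ha1, ha2⟩ := decP_spec iL a.val a.isLt
  obtain ⟨hb1, hb2⟩ := decP_spec iL b.val b.isLt
  set pa := decP iL a.val a.isLt
  set pb := decP iL b.val b.isLt
  have hval : st jL (w pa.1).val + pa.2 = st jL (w pb.1).val + pb.2 :=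
    congrArg Fin.val hab
  have hsa : (w pa.1).val < jL.length := by rw [hlen]; exact (w pa.1).isLt
  have hsb : (w pb.1).val < jL.length := by rw [hlen]; exact (w pb.1).isLt
  have hea := seqrel_get hlen hw pa.1
  have heb := seqrel_get hlen hw pb.1
  have hka : pa.2 < (blk (jL[(w pa.1).val]'hsa)).length := by rw [hea]; exact ha1
  have hkb : pb.2 < (blk (jL[(w pb.1).val]'hsb)).length := by rw [heb]; exact hb1
  obtain ⟨h1, h2⟩ := dec_unique hsa hsb hka hkb hval
  have : pa.1 = pb.1 := w.injective (Fin.ext h1)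
  apply Fin.ext
  rw [ha2, hb2, this, h2]

/-- The candidate permutation. -/
noncomputable def Fperm (hlen : jL.length = iL.length)
    (hDJ : (phiL jL).length = (phiL iL).length)
    (w : Equiv.Perm (Fin iL.length)) (hw : SeqRel iL jL w) :
    Equiv.Perm (Fin (phiL iL).length) :=
  Equiv.ofBijective _ (Finite.injective_iff_bijective.mp (Ffun_inj hlen hDJ w hw))

lemma Fperm_apply (hlen : jL.length = iL.length)
    (hDJ : (phiL jL).length = (phiL iL).length)
    (w : Equiv.Perm (Fin iL.length)) (hw : SeqRel iL jL w)
    (r : Fin iL.length) (k : ℕ) (hk : k < (blk (iL.get r)).length)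
    (ha : st iL r.val + k < (phiL iL).length) :
    (Fperm hlen hDJ w hw ⟨st iL r.val + k, ha⟩).val = st jL (w r).val + k :=
  Ffun_val hlen hDJ w hw r k hk ha

lemma Fperm_seqrel (hlen : jL.length = iL.length)
    (hDJ : (phiL jL).length = (phiL iL).length)
    (w : Equiv.Perm (Fin iL.length)) (hw : SeqRel iL jL w) :
    SeqRel (phiL iL) (phiL jL) (Fperm hlen hDJ w hw) := by
  intro a
  obtain ⟨h1, h2⟩ := decP_spec iL a.val a.isLt
  set p := decP iL a.val a.isLt
  have hsa : (w p.1).val < jL.length := by rw [hlen]; exact (w p.1).isLt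
  have hel := seqrel_get hlen hw p.1
  have hFa : (Fperm hlen hDJ w hw a).val = st jL (w p.1).val + p.2 := rfl
  have hk' : p.2 < (blk (jL[(w p.1).val]'hsa)).length := by rw [hel]; exact h1
  rw [hFa, getElem?_phiL hsa hk', hel]
  have ha' : a.val = st iL p.1.val + p.2 := h2
  rw [ha', getElem?_phiL p.1.isLt h1]
  rfl

lemma Fperm_balanced (hlen : jL.length = iL.length)
    (hDJ : (phiL jL).length = (phiL iL).length)
    (w : Equiv.Perm (Fin iL.length)) (hw : SeqRel iL jL w) :
    BalancedP iL (Fperm hlen hDJ w hw) := by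
  rintro a b ⟨i1, hletter⟩ hb
  obtain ⟨h1, h2⟩ := decP_spec iL a.val a.isLt
  set p := decP iL a.val a.isLt
  simp only [List.get_eq_getElem] at h1
  rw [h2, getElem?_phiL p.1.isLt h1] at hletter
  obtain ⟨hv, hk0⟩ := blk_inr_inl hletter
  have hbl : (blk (iL[p.1.val])).length = 2 := by rw [hv]; rfl
  have hle := st_add_le (l := iL) p.1.isLt
  have hisltb := b.isLt
  have hislta := a.isLt
  have h0lt : st iL p.1.val + 0 < (phiL iL).length := by omega
  have h1lt : st iL p.1.val + 1 < (phiL iL).length := by omega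
  have haval : a = (⟨st iL p.1.val + 0, h0lt⟩ : Fin _) :=
    Fin.ext (show a.val = st iL p.1.val + 0 by omega)
  have hbval : b = (⟨st iL p.1.val + 1, h1lt⟩ : Fin _) :=
    Fin.ext (show b.val = st iL p.1.val + 1 by omega)
  rw [haval, hbval,
    Fperm_apply hlen hDJ w hw p.1 1 (by simp only [List.get_eq_getElem]; omega) h1lt,
    Fperm_apply hlen hDJ w hw p.1 0 (by simp only [List.get_eq_getElem]; omega) h0lt]

lemma Fperm_order (hlen : jL.length = iL.length)
    (hDJ : (phiL jL).length = (phiL iL).length)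
    (w : Equiv.Perm (Fin iL.length)) (hw : SeqRel iL jL w)
    (r t : Fin iL.length) (r' t' : Fin (phiL iL).length)
    (hr' : (r' : ℕ) = st iL r.val) (ht' : (t' : ℕ) = st iL t.val) :
    (w r < w t ↔ Fperm hlen hDJ w hw r' < Fperm hlen hDJ w hw t') := by
  have hrlt : st iL r.val + 0 < (phiL iL).length := by have := r'.isLt; omega
  have htlt : st iL t.val + 0 < (phiL iL).length := by have := t'.isLt; omega
  have hr'' : r' = (⟨st iL r.val + 0, hrlt⟩ : Fin _) :=
    Fin.ext (show r'.val = st iL r.val + 0 by omega)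
  have ht'' : t' = (⟨st iL t.val + 0, htlt⟩ : Fin _) :=
    Fin.ext (show t'.val = st iL t.val + 0 by omega)
  have hsr : (w r).val < jL.length := by rw [hlen]; exact (w r).isLt
  have hst : (w t).val < jL.length := by rw [hlen]; exact (w t).isLt
  rw [hr'', ht'', Fin.lt_iff_val_lt_val (a := w r),
    Fin.lt_iff_val_lt_val (a := Fperm hlen hDJ w hw _),
    Fperm_apply hlen hDJ w hw r 0 (one_le_blk _) hrlt,
    Fperm_apply hlen hDJ w hw t 0 (one_le_blk _) htlt,
    Nat.add_zero, Nat.add_zero, st_lt_st_iff hsr hst]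

/-- two permutations inducing the same order are equal -/
lemma perm_eq_of_order {n : ℕ} (p q : Equiv.Perm (Fin n))
    (h : ∀ r t, p r < p t ↔ q r < q t) : q = p := by
  have hmono : StrictMono (fun x => q (p.symm x)) := by
    intro x y hxy
    exact (h (p.symm x) (p.symm y)).mp (by simpa using hxy)
  let E : Fin n ≃o Fin n :=
    { toEquiv := p.symm.trans q, map_rel_iff' := @fun a b => hmono.le_iff_le }
  have hE : ∀ x, E x = x := by
    have : E = OrderIso.refl (Fin n) := Subsingleton.elim _ _
    intro x; rw [this]; rfl
  ext y
  have h2 : q (p.symm (p y)) = p y := hE (p y)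
  rw [Equiv.symm_apply_apply] at h2
  rw [h2]

lemma exists_base (hlen : jL.length = iL.length)
    (hDJ : (phiL jL).length = (phiL iL).length)
    (W : Equiv.Perm (Fin (phiL iL).length))
    (hW : SeqRel (phiL iL) (phiL jL) W) :
    ∃ v : Equiv.Perm (Fin iL.length), SeqRel iL jL v ∧
      (∀ r : Fin iL.length, ∀ r' : Fin (phiL iL).length,
        (r' : ℕ) = st iL r.val → (W r').val = st jL (v r).val) ∧
      (∀ r t : Fin iL.length, ∀ r' t' : Fin (phiL iL).length,
        (r' : ℕ) = st iL r.val → (t' : ℕ) = st iL t.val →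
        (v r < v t ↔ W r' < W t')) := by
  have stepA : ∀ r : Fin iL.length, ∃ s : Fin iL.length,
      (W ⟨st iL r.val, st_lt_total r.isLt⟩).val = st jL s.val ∧
      jL[s.val]'(by rw [hlen]; exact s.isLt) = iL[r.val] := by
    intro r
    set r' : Fin (phiL iL).length := ⟨st iL r.val, st_lt_total r.isLt⟩ with hr'
    have h := hW r'
    have hWlt : (W r').val < (phiL jL).length := by rw [hDJ]; exact (W r').isLt
    obtain ⟨⟨s, m⟩, hm, heq⟩ := exists_dec jL (W r').val hWlt
    simp only [List.get_eq_getElem] at hm heq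
    have hR : (phiL iL)[(r' : ℕ)]? = (blk iL[r.val])[0]? := by
      have h00 : (r' : ℕ) = st iL r.val + 0 := rfl
      rw [h00, getElem?_phiL r.isLt (one_le_blk _)]
    rw [heq, getElem?_phiL s.isLt hm, hR] at h
    obtain ⟨hv, hm0⟩ := blk_head_match h
    exact ⟨⟨s.val, by rw [← hlen]; exact s.isLt⟩,
      by rw [heq, hm0, Nat.add_zero], hv⟩
  choose v hv1 hv2 using stepA
  have vinj : Function.Injective v := by
    intro r1 r2 h12
    have e1 := hv1 r1
    have e2 := hv1 r2
    rw [h12] at e1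
    have hWW : (W ⟨st iL r1.val, st_lt_total r1.isLt⟩).val
        = (W ⟨st iL r2.val, st_lt_total r2.isLt⟩).val := by rw [e1, e2]
    have hmk := W.injective (Fin.ext hWW)
    have hstv : st iL r1.val = st iL r2.val := congrArg Fin.val hmk
    apply Fin.ext
    have h1 := st_lt_st_iff (l := iL) r1.isLt r2.isLt
    have h2 := st_lt_st_iff (l := iL) r2.isLt r1.isLt
    omega
  refine ⟨Equiv.ofBijective v (Finite.injective_iff_bijective.mp vinj), ?_, ?_, ?_⟩
  · intro a
    have := hv2 a
    rw [List.getElem?_eq_getElem (by rw [hlen]; exact (v a).isLt),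
      List.getElem?_eq_getElem a.isLt]
    exact congrArg some this
  · intro r r' hr'
    have hre : r' = ⟨st iL r.val, st_lt_total r.isLt⟩ := Fin.ext hr'
    rw [hre]
    exact hv1 r
  · intro r t r' t' hr' ht'
    have er : r' = ⟨st iL r.val, st_lt_total r.isLt⟩ := Fin.ext hr'
    have et : t' = ⟨st iL t.val, st_lt_total t.isLt⟩ := Fin.ext ht'
    have hsr : (v r).val < jL.length := by rw [hlen]; exact (v r).isLt
    have hst : (v t).val < jL.length := by rw [hlen]; exact (v t).isLt
    rw [er, et, Fin.lt_iff_val_lt_val (a := W _), hv1 r, hv1 t,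
      st_lt_st_iff hsr hst]
    exact Iff.rfl

lemma value_unique (hlen : jL.length = iL.length)
    (hDJ : (phiL jL).length = (phiL iL).length)
    (wt : Equiv.Perm (Fin iL.length)) (hwt : SeqRel iL jL wt)
    (W : Equiv.Perm (Fin (phiL iL).length))
    (hW : SeqRel (phiL iL) (phiL jL) W)
    (hbal : BalancedP iL W)
    (hord : ∀ r t : Fin iL.length, ∀ r' t' : Fin (phiL iL).length,
      (r' : ℕ) = st iL r.val → (t' : ℕ) = st iL t.val →
      (wt r < wt t ↔ W r' < W t')) :
    W = Fperm hlen hDJ wt hwt := by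
  obtain ⟨ve, hseq, hv1, hvord⟩ := exists_base hlen hDJ W hW
  have hord2 : ∀ r t, ve r < ve t ↔ wt r < wt t := by
    intro r t
    rw [hvord r t ⟨st iL r.val, st_lt_total r.isLt⟩ ⟨st iL t.val, st_lt_total t.isLt⟩ rfl rfl]
    rw [hord r t ⟨st iL r.val, st_lt_total r.isLt⟩ ⟨st iL t.val, st_lt_total t.isLt⟩ rfl rfl]
  have hve : wt = ve := perm_eq_of_order ve wt hord2
  ext a
  obtain ⟨h1, h2⟩ := decP_spec iL a.val a.isLt
  set p := decP iL a.val a.isLt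
  simp only [List.get_eq_getElem] at h1
  have hFa : (Fperm hlen hDJ wt hwt a).val = st jL (wt p.1).val + p.2 := rfl
  have hWst : (W ⟨st iL p.1.val, st_lt_total p.1.isLt⟩).val = st jL (wt p.1).val := by
    have h := hv1 p.1 ⟨st iL p.1.val, st_lt_total p.1.isLt⟩ rfl
    rw [hve]
    exact h
  have hble := blk_le_two (iL[p.1.val])
  rcases hp2 : p.2 with _ | k1
  · -- p.2 = 0
    have haval : a = (⟨st iL p.1.val, st_lt_total p.1.isLt⟩ : Fin _) :=
      Fin.ext (show a.val = st iL p.1.val by omega)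
    have hWa : (W a).val = st jL (wt p.1).val := by rw [haval]; exact hWst
    omega
  · rcases k1 with _ | k2
    · -- p.2 = 1
      have hgt : 1 < (blk (iL[p.1.val])).length := by omega
      rcases hblk : iL[p.1.val] with c | b
      · rw [hblk] at hgt; simp [blk] at hgt
      · have hgetl := getElem?_phiL (l := iL) p.1.isLt (one_le_blk (iL[p.1.val]))
        rw [Nat.add_zero] at hgetl
        have hletter : (phiL iL)[st iL p.1.val]? = some (Sum.inr (Sum.inl b)) := by
          rw [hgetl, hblk]; rfl
        have hbb := hbal ⟨st iL p.1.val, st_lt_total p.1.isLt⟩ a ⟨b, hletter⟩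
          (show a.val = st iL p.1.val + 1 by omega)
        omega
    · omega

end Main

end Stmt10Aux


open Stmt10Aux

/-- there is a unique map u : 𝔖_{i,j} → 𝔖_{i',j'} such that each
u(w̃) is balanced and order-compatible with w̃ on block starts; moreover u is a
bijection onto the set of balanced permutations in 𝔖_{i',j'}. -/
theorem stmt10 (I0 I1 : Type) (iL jL : List (I0 ⊕ I1)) (hperm : iL.Perm jL) :
    (∃! u, Pmap iL jL u) ∧
    ∀ u, Pmap iL jL u → Function.Injective u ∧
      ∀ w' : {w : Equiv.Perm (Fin (phiL iL).length) // SeqRel (phiL iL) (phiL jL) w},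
        BalancedP iL w'.val → ∃ wt, u wt = w' := by
  have hlen : jL.length = iL.length := hperm.length_eq.symm
  have hDJ : (phiL jL).length = (phiL iL).length := phiL_length_perm hperm
  let U : {w : Equiv.Perm (Fin iL.length) // SeqRel iL jL w} →
      {w : Equiv.Perm (Fin (phiL iL).length) // SeqRel (phiL iL) (phiL jL) w} :=
    fun wt => ⟨Fperm hlen hDJ wt.1 wt.2, Fperm_seqrel hlen hDJ wt.1 wt.2⟩
  have hPU : Pmap iL jL U := by
    intro wt
    exact ⟨Fperm_balanced hlen hDJ wt.1 wt.2,
      fun r t r' t' hr' ht' => Fperm_order hlen hDJ wt.1 wt.2 r t r' t' hr' ht'⟩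
  have huniq : ∀ u, Pmap iL jL u → u = U := by
    intro u hu
    funext wt
    apply Subtype.ext
    obtain ⟨hb, ho⟩ := hu wt
    exact value_unique hlen hDJ wt.1 wt.2 (u wt).1 (u wt).2 hb ho
  refine ⟨⟨U, hPU, huniq⟩, ?_⟩
  intro u hu
  constructor
  · intro w1 w2 h12
    obtain ⟨hb1, ho1⟩ := hu w1
    obtain ⟨hb2, ho2⟩ := hu w2
    apply Subtype.ext
    apply perm_eq_of_order w2.1 w1.1
    intro r t
    rw [ho2 r t ⟨st iL r.val, st_lt_total r.isLt⟩ ⟨st iL t.val, st_lt_total t.isLt⟩ rfl rfl,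
      ho1 r t ⟨st iL r.val, st_lt_total r.isLt⟩ ⟨st iL t.val, st_lt_total t.isLt⟩ rfl rfl,
      h12]
  · intro w' hbal'
    obtain ⟨ve, hseq, hv1, hvord⟩ := exists_base hlen hDJ w'.1 w'.2
    refine ⟨⟨ve, hseq⟩, ?_⟩
    apply Subtype.ext
    obtain ⟨hb, ho⟩ := hu ⟨ve, hseq⟩
    have h1 : (u ⟨ve, hseq⟩).1 = Fperm hlen hDJ ve hseq :=
      value_unique hlen hDJ ve hseq _ (u ⟨ve, hseq⟩).2 hb ho
    have h2 : w'.1 = Fperm hlen hDJ ve hseq :=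
      value_unique hlen hDJ ve hseq w'.1 w'.2 hbal' hvord
    rw [h1, h2]
end

section
/- Fix 0 ≤ k < e and define Υ : ℤ → ℤ by Υ(ae+b) = a(e+1)+b for 0 ≤ b ≤ k and a(e+1)+b+1 for k+1 ≤ b ≤ e-1. Let U_e ⊂ U_{e+1} be the linear embedding u_r ↦ u'_{Υ(r)}. Define endomorphisms E_i, F_i (i ∈ ℤ/eℤ) of U_{e+1} by: E_i = e_i, F_i = f_i (operators for sl̃_{e+1}) if 0 ≤ i < k; E_k = e_k e_{k+1}, F_k = f_{k+1} f_k; and E_i = e_{i+1}, F_i = f_{i+1} if k < i < e (indices of the sl̃_{e+1}-operators taken mod e+1). Then the image of U_e in U_{e+1} is stable under all E_i and F_i, and under the identification u_r ↔ u'_{Υ(r)}, the operator F_i acts as the operator f_i of sl̃_e on U_e and E_i acts as e_i. -/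
set_option maxHeartbeats 1000000

/-- Υ : ℤ → ℤ, Υ(ae+b) = a(e+1)+b for 0 ≤ b ≤ k and a(e+1)+b+1 for
k+1 ≤ b ≤ e-1. -/
def Ups (e k : ℕ) (n : ℤ) : ℤ :=
  (n / e) * (e + 1) + (if n % e ≤ (k : ℤ) then n % e else n % e + 1)

/-- The operator f_i on U_e : f_i(u_r) = u_{r+1} if i ≡ r mod e, else 0. -/
noncomputable def Fop (e : ℕ) (i : ZMod e) : (ℤ →₀ ℂ) →ₗ[ℂ] (ℤ →₀ ℂ) :=
  Finsupp.lsum ℂ fun r : ℤ =>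
    if ((r : ZMod e) = i) then Finsupp.lsingle (r + 1) else 0

/-- The operator e_i on U_e : e_i(u_r) = u_{r-1} if i ≡ r-1 mod e, else 0. -/
noncomputable def Eop (e : ℕ) (i : ZMod e) : (ℤ →₀ ℂ) →ₗ[ℂ] (ℤ →₀ ℂ) :=
  Finsupp.lsum ℂ fun r : ℤ =>
    if ((r : ZMod e) = i + 1) then Finsupp.lsingle (r - 1) else 0

/-- The embedding U_e ⊂ U_{e+1}, u_r ↦ u'_{Υ(r)}. -/
noncomputable def iotaU (e k : ℕ) : (ℤ →₀ ℂ) →ₗ[ℂ] (ℤ →₀ ℂ) :=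
  Finsupp.lmapDomain ℂ ℂ (Ups e k)

lemma Fop_single (e : ℕ) (i : ZMod e) (r : ℤ) (c : ℂ) :
    Fop e i (Finsupp.single r c) =
      if ((r : ZMod e) = i) then Finsupp.single (r + 1) c else 0 := by
  simp only [Fop, Finsupp.lsum_single]
  split_ifs <;> simp

lemma Eop_single (e : ℕ) (i : ZMod e) (r : ℤ) (c : ℂ) :
    Eop e i (Finsupp.single r c) =
      if ((r : ZMod e) = i + 1) then Finsupp.single (r - 1) c else 0 := by
  simp only [Eop, Finsupp.lsum_single]
  split_ifs <;> simp

lemma iotaU_single (e k : ℕ) (r : ℤ) (c : ℂ) :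
    iotaU e k (Finsupp.single r c) = Finsupp.single (Ups e k r) c := by
  rw [iotaU, Finsupp.lmapDomain_apply, Finsupp.mapDomain_single]

lemma key (f g : (ℤ →₀ ℂ) →ₗ[ℂ] (ℤ →₀ ℂ))
    (h : ∀ r : ℤ, f (Finsupp.single r 1) = g (Finsupp.single r 1)) (v : ℤ →₀ ℂ) :
    f v = g v := by
  have : f = g := Finsupp.lhom_ext fun a b => by
    rw [show Finsupp.single a b = b • Finsupp.single a (1:ℂ) by
        rw [Finsupp.smul_single', mul_one],
      map_smul, map_smul, h a]
  rw [this]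

lemma cond_iff (n : ℕ) (x j : ℤ) :
    ((x : ZMod n) = ((j : ℤ) : ZMod n)) ↔ x % n = j % n := by
  rw [ZMod.intCast_eq_intCast_iff]; rfl

lemma emod_of (m q b : ℤ) (hb0 : 0 ≤ b) (hb : b < m) : (q * m + b) % m = b := by
  rw [add_comm, Int.add_mul_emod_self_right]
  exact Int.emod_eq_of_lt hb0 hb

lemma exists_qb (e : ℕ) (he : 0 < e) (r : ℤ) :
    ∃ q b : ℤ, 0 ≤ b ∧ b < (e : ℤ) ∧ r = q * e + b := by
  refine ⟨r / e, r % e, Int.emod_nonneg r (by exact_mod_cast he.ne'),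
    Int.emod_lt_of_pos r (by exact_mod_cast he), ?_⟩
  rw [mul_comm]; exact (Int.mul_ediv_add_emod r e).symm

lemma ups_eq' (e k : ℕ) (he : 0 < e) (q b : ℤ) (hb0 : 0 ≤ b) (hb : b < e) :
    Ups e k (q * e + b) = q * (e + 1) + (if b ≤ (k : ℤ) then b else b + 1) := by
  have hne : (e:ℤ) ≠ 0 := by exact_mod_cast he.ne'
  have h1 : (q * e + b) / e = q := by
    rw [add_comm, mul_comm, Int.add_mul_ediv_left _ _ hne,
      Int.ediv_eq_zero_of_lt hb0 hb, zero_add]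
  have h2 : (q * e + b) % e = b := emod_of _ _ _ hb0 hb
  rw [Ups, h1, h2]

lemma ups_eq2 (e k : ℕ) (he : 0 < e) (q b : ℤ) (hb0 : 0 ≤ b) (hb : b < (e : ℤ)) :
    Ups e k (q * e + b) = q * ((e + 1 : ℕ) : ℤ) + (if b ≤ (k : ℤ) then b else b + 1) := by
  rw [ups_eq' e k he q b hb0 hb]
  have : ((e + 1 : ℕ) : ℤ) = (e : ℤ) + 1 := by push_cast; ring
  rw [this]

lemma ups_succ (e k : ℕ) (he : 0 < e) (q b : ℤ) (hb0 : 0 ≤ b) (hb : b < (e : ℤ)) :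
    Ups e k (q * e + b + 1) =
      if b + 1 < (e : ℤ) then
        q * ((e + 1 : ℕ) : ℤ) + (if b + 1 ≤ (k : ℤ) then b + 1 else b + 2)
      else q * ((e + 1 : ℕ) : ℤ) + ((e : ℤ) + 1) := by
  by_cases h : b + 1 < (e : ℤ)
  · rw [if_pos h, show q * (e:ℤ) + b + 1 = q * e + (b + 1) by ring,
      ups_eq2 e k he q (b+1) (by omega) h]
    congr 1
    split_ifs <;> omega
  · have hb1 : b + 1 = (e : ℤ) := by omega
    rw [if_neg h, show q * (e:ℤ) + b + 1 = (q + 1) * e + 0 by rw [← hb1]; ring,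
      ups_eq2 e k he (q+1) 0 le_rfl (by exact_mod_cast he),
      if_pos (by positivity : (0:ℤ) ≤ (k:ℤ))]
    push_cast; ring

lemma ups_pred (e k : ℕ) (he : 0 < e) (q b : ℤ) (hb0 : 0 ≤ b) (hb : b < (e : ℤ)) :
    Ups e k (q * e + b - 1) =
      if 1 ≤ b then
        q * ((e + 1 : ℕ) : ℤ) + (if b - 1 ≤ (k : ℤ) then b - 1 else b)
      else q * ((e + 1 : ℕ) : ℤ) +
        ((if (e : ℤ) - 1 ≤ (k : ℤ) then (e : ℤ) - 1 else (e : ℤ)) - ((e : ℤ) + 1)) := by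
  by_cases h : 1 ≤ b
  · rw [if_pos h, show q * (e:ℤ) + b - 1 = q * e + (b - 1) by ring,
      ups_eq2 e k he q (b-1) (by omega) (by omega)]
    congr 1
    split_ifs <;> omega
  · have hb1 : b = 0 := by omega
    rw [if_neg h, show q * (e:ℤ) + b - 1 = (q - 1) * e + ((e:ℤ) - 1) by rw [hb1]; ring,
      ups_eq2 e k he (q-1) ((e:ℤ)-1) (by omega) (by omega)]
    rcases em ((e:ℤ) - 1 ≤ (k:ℤ)) with hc | hc
    · rw [if_pos hc, if_pos hc]; push_cast; ring
    · rw [if_neg hc, if_neg hc]; push_cast; ring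

lemma cond_main (n : ℕ) (q B j : ℤ) (z : ZMod n) (hz : z = ((j : ℤ) : ZMod n))
    (hB0 : 0 ≤ B) (hB : B < (n : ℤ)) (hj0 : 0 ≤ j) (hj : j ≤ (n : ℤ)) :
    (((q * (n : ℤ) + B : ℤ) : ZMod n) = z) ↔
      ((j < (n : ℤ) ∧ B = j) ∨ (j = (n : ℤ) ∧ B = 0)) := by
  subst hz
  rw [cond_iff, emod_of _ _ _ hB0 hB]
  by_cases h : j < (n : ℤ)
  · rw [Int.emod_eq_of_lt hj0 h]; omega
  · have hj' : j = (n : ℤ) := by omega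
    rw [hj', Int.emod_self]; omega

lemma cond_succ (n : ℕ) (q B j : ℤ) (z : ZMod n) (hz : z = ((j : ℤ) : ZMod n))
    (hB0 : 0 ≤ B) (hB : B ≤ (n : ℤ) - 1) (hj0 : 0 ≤ j) (hj : j < (n : ℤ)) :
    (((q * (n : ℤ) + B + 1 : ℤ) : ZMod n) = z) ↔
      ((B + 1 ≤ (n : ℤ) - 1 ∧ B + 1 = j) ∨ (B = (n : ℤ) - 1 ∧ j = 0)) := by
  subst hz
  by_cases h : B + 1 ≤ (n : ℤ) - 1
  · rw [show q * (n:ℤ) + B + 1 = q * n + (B + 1) by ring,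
      cond_iff, emod_of _ _ _ (by omega) (by omega), Int.emod_eq_of_lt hj0 hj]
    omega
  · have hB' : B = (n : ℤ) - 1 := by omega
    rw [show q * (n:ℤ) + B + 1 = (q + 1) * n + 0 by rw [hB']; ring,
      cond_iff, emod_of _ _ _ le_rfl (by omega), Int.emod_eq_of_lt hj0 hj]
    omega

lemma cond_pred (n : ℕ) (q B j : ℤ) (z : ZMod n) (hz : z = ((j : ℤ) : ZMod n))
    (hB0 : 0 ≤ B) (hB : B ≤ (n : ℤ) - 1) (hj0 : 0 ≤ j) (hj : j < (n : ℤ)) :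
    (((q * (n : ℤ) + B - 1 : ℤ) : ZMod n) = z) ↔
      ((1 ≤ B ∧ B - 1 = j) ∨ (B = 0 ∧ (n : ℤ) - 1 = j)) := by
  subst hz
  by_cases h : 1 ≤ B
  · rw [show q * (n:ℤ) + B - 1 = q * n + (B - 1) by ring,
      cond_iff, emod_of _ _ _ (by omega) (by omega), Int.emod_eq_of_lt hj0 hj]
    omega
  · have hB' : B = 0 := by omega
    rw [show q * (n:ℤ) + B - 1 = (q - 1) * n + ((n:ℤ) - 1) by rw [hB']; ring,
      cond_iff, emod_of _ _ _ (by omega) (by omega), Int.emod_eq_of_lt hj0 hj]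
    omega

theorem stmt13 (e k : ℕ) (he : 2 ≤ e) (hk : k < e) :
    ∀ i : ℕ, i < e → ∀ v : ℤ →₀ ℂ,
      ((if i < k then Fop (e + 1) (i : ZMod (e + 1))
        else if i = k then (Fop (e + 1) ((k : ZMod (e + 1)) + 1)).comp
          (Fop (e + 1) (k : ZMod (e + 1)))
        else Fop (e + 1) ((i : ZMod (e + 1)) + 1)) (iotaU e k v)
          = iotaU e k (Fop e (i : ZMod e) v)) ∧
      ((if i < k then Eop (e + 1) (i : ZMod (e + 1))
        else if i = k then (Eop (e + 1) (k : ZMod (e + 1))).comp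
          (Eop (e + 1) ((k : ZMod (e + 1)) + 1))
        else Eop (e + 1) ((i : ZMod (e + 1)) + 1)) (iotaU e k v)
          = iotaU e k (Eop e (i : ZMod e) v)) := by
  intro i hi v
  constructor
  · split_ifs with h1 h2
    · -- F, i < k
      refine key ((Fop (e+1) (i : ZMod (e+1))).comp (iotaU e k))
        ((iotaU e k).comp (Fop e (i : ZMod e))) (fun r => ?_) v
      simp only [LinearMap.comp_apply, iotaU_single, Fop_single, apply_ite, map_zero]
      obtain ⟨q, b, hb0, hb, rfl⟩ := exists_qb e (by omega) r
      have hB0 : 0 ≤ (if b ≤ (k:ℤ) then b else b + 1) := by split_ifs <;> omega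
      have hBlt : (if b ≤ (k:ℤ) then b else b + 1) < ((e+1 : ℕ) : ℤ) := by
        split_ifs <;> push_cast <;> omega
      rw [ups_eq2 e k (by omega) q b hb0 hb, ups_succ e k (by omega) q b hb0 hb]
      simp only [cond_main (e+1) q _ (i:ℤ) ((i : ℕ) : ZMod (e+1)) (by push_cast; ring)
          hB0 hBlt (by positivity) (by push_cast; omega),
        cond_main e q b (i:ℤ) ((i : ℕ) : ZMod e) (by push_cast; ring)
          hb0 hb (by positivity) (by push_cast; omega)]
      generalize q * ((e+1:ℕ):ℤ) = Q
      push_cast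
      split_ifs <;> first | rfl | (exfalso; omega) | (congr 1; omega)
    · -- F, i = k
      subst h2
      refine key (((Fop (e + 1) ((i : ZMod (e + 1)) + 1)).comp
          (Fop (e + 1) (i : ZMod (e + 1)))).comp (iotaU e i))
        ((iotaU e i).comp (Fop e (i : ZMod e))) (fun r => ?_) v
      simp only [LinearMap.comp_apply, iotaU_single, Fop_single, apply_ite, map_zero]
      obtain ⟨q, b, hb0, hb, rfl⟩ := exists_qb e (by omega) r
      have hB0 : 0 ≤ (if b ≤ (i:ℤ) then b else b + 1) := by split_ifs <;> omega
      have hBlt : (if b ≤ (i:ℤ) then b else b + 1) < ((e+1 : ℕ) : ℤ) := by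
        split_ifs <;> push_cast <;> omega
      rw [ups_eq2 e i (by omega) q b hb0 hb, ups_succ e i (by omega) q b hb0 hb]
      simp only [cond_main (e+1) q _ (i:ℤ) ((i : ℕ) : ZMod (e+1)) (by push_cast; ring)
          hB0 hBlt (by positivity) (by push_cast; omega),
        cond_succ (e+1) q _ ((i:ℤ)+1) (((i : ℕ) : ZMod (e+1)) + 1) (by push_cast; ring)
          hB0 (by push_cast at hBlt ⊢; omega) (by positivity) (by push_cast; omega),
        cond_main e q b (i:ℤ) ((i : ℕ) : ZMod e) (by push_cast; ring)
          hb0 hb (by positivity) (by push_cast; omega)]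
      generalize q * ((e+1:ℕ):ℤ) = Q
      push_cast
      split_ifs <;> first | rfl | (exfalso; omega) | (congr 1; omega)
    · -- F, i > k
      refine key ((Fop (e+1) ((i : ZMod (e+1)) + 1)).comp (iotaU e k))
        ((iotaU e k).comp (Fop e (i : ZMod e))) (fun r => ?_) v
      simp only [LinearMap.comp_apply, iotaU_single, Fop_single, apply_ite, map_zero]
      obtain ⟨q, b, hb0, hb, rfl⟩ := exists_qb e (by omega) r
      have hB0 : 0 ≤ (if b ≤ (k:ℤ) then b else b + 1) := by split_ifs <;> omega
      have hBlt : (if b ≤ (k:ℤ) then b else b + 1) < ((e+1 : ℕ) : ℤ) := by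
        split_ifs <;> push_cast <;> omega
      rw [ups_eq2 e k (by omega) q b hb0 hb, ups_succ e k (by omega) q b hb0 hb]
      simp only [cond_main (e+1) q _ ((i:ℤ)+1) (((i : ℕ) : ZMod (e+1)) + 1) (by push_cast; ring)
          hB0 hBlt (by positivity) (by push_cast; omega),
        cond_main e q b (i:ℤ) ((i : ℕ) : ZMod e) (by push_cast; ring)
          hb0 hb (by positivity) (by push_cast; omega)]
      generalize q * ((e+1:ℕ):ℤ) = Q
      push_cast
      split_ifs <;> first | rfl | (exfalso; omega) | (congr 1; omega)
  · split_ifs with h1 h2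
    · -- E, i < k
      refine key ((Eop (e+1) (i : ZMod (e+1))).comp (iotaU e k))
        ((iotaU e k).comp (Eop e (i : ZMod e))) (fun r => ?_) v
      simp only [LinearMap.comp_apply, iotaU_single, Eop_single, apply_ite, map_zero]
      obtain ⟨q, b, hb0, hb, rfl⟩ := exists_qb e (by omega) r
      have hB0 : 0 ≤ (if b ≤ (k:ℤ) then b else b + 1) := by split_ifs <;> omega
      have hBlt : (if b ≤ (k:ℤ) then b else b + 1) < ((e+1 : ℕ) : ℤ) := by
        split_ifs <;> push_cast <;> omega
      rw [ups_eq2 e k (by omega) q b hb0 hb, ups_pred e k (by omega) q b hb0 hb]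
      simp only [cond_main (e+1) q _ ((i:ℤ)+1) (((i : ℕ) : ZMod (e+1)) + 1) (by push_cast; ring)
          hB0 hBlt (by positivity) (by push_cast; omega),
        cond_main e q b ((i:ℤ)+1) (((i : ℕ) : ZMod e) + 1) (by push_cast; ring)
          hb0 hb (by positivity) (by push_cast; omega)]
      generalize q * ((e+1:ℕ):ℤ) = Q
      push_cast
      split_ifs <;> first | rfl | (exfalso; omega) | (congr 1; omega)
    · -- E, i = k
      subst h2
      refine key (((Eop (e + 1) (i : ZMod (e + 1))).comp
          (Eop (e + 1) ((i : ZMod (e + 1)) + 1))).comp (iotaU e i))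
        ((iotaU e i).comp (Eop e (i : ZMod e))) (fun r => ?_) v
      simp only [LinearMap.comp_apply, iotaU_single, Eop_single, apply_ite, map_zero]
      obtain ⟨q, b, hb0, hb, rfl⟩ := exists_qb e (by omega) r
      have hB0 : 0 ≤ (if b ≤ (i:ℤ) then b else b + 1) := by split_ifs <;> omega
      have hBlt : (if b ≤ (i:ℤ) then b else b + 1) < ((e+1 : ℕ) : ℤ) := by
        split_ifs <;> push_cast <;> omega
      rw [ups_eq2 e i (by omega) q b hb0 hb, ups_pred e i (by omega) q b hb0 hb]
      simp only [cond_main (e+1) q _ ((i:ℤ)+1+1) (((i : ℕ) : ZMod (e+1)) + 1 + 1) (by push_cast; ring)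
          hB0 hBlt (by positivity) (by push_cast; omega),
        cond_pred (e+1) q _ ((i:ℤ)+1) (((i : ℕ) : ZMod (e+1)) + 1) (by push_cast; ring)
          hB0 (by push_cast at hBlt ⊢; omega) (by positivity) (by push_cast; omega),
        cond_main e q b ((i:ℤ)+1) (((i : ℕ) : ZMod e) + 1) (by push_cast; ring)
          hb0 hb (by positivity) (by push_cast; omega)]
      generalize q * ((e+1:ℕ):ℤ) = Q
      push_cast
      split_ifs <;> first | rfl | (exfalso; omega) | (congr 1; omega)
    · -- E, i > k
      refine key ((Eop (e+1) ((i : ZMod (e+1)) + 1)).comp (iotaU e k))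
        ((iotaU e k).comp (Eop e (i : ZMod e))) (fun r => ?_) v
      simp only [LinearMap.comp_apply, iotaU_single, Eop_single, apply_ite, map_zero]
      obtain ⟨q, b, hb0, hb, rfl⟩ := exists_qb e (by omega) r
      have hB0 : 0 ≤ (if b ≤ (k:ℤ) then b else b + 1) := by split_ifs <;> omega
      have hBlt : (if b ≤ (k:ℤ) then b else b + 1) < ((e+1 : ℕ) : ℤ) := by
        split_ifs <;> push_cast <;> omega
      rw [ups_eq2 e k (by omega) q b hb0 hb, ups_pred e k (by omega) q b hb0 hb]
      simp only [cond_main (e+1) q _ ((i:ℤ)+1+1) (((i : ℕ) : ZMod (e+1)) + 1 + 1) (by push_cast; ring)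
          hB0 hBlt (by positivity) (by push_cast; omega),
        cond_main e q b ((i:ℤ)+1) (((i : ℕ) : ZMod e) + 1) (by push_cast; ring)
          hb0 hb (by positivity) (by push_cast; omega)]
      generalize q * ((e+1:ℕ):ℤ) = Q
      push_cast
      split_ifs <;> first | rfl | (exfalso; omega) | (congr 1; omega)
end

section
/- Let k be a field, q ∈ k with q ≠ 0,1, and let the affine Hecke algebra H_{d,k}(q) act on k[X₁^{±1},...,X_d^{±1}] by: X_r^{±1} acts by multiplication, and T_r(P) = q·s_r(P) + (q-1)·X_{r+1}(X_r - X_{r+1})⁻¹(s_r(P) - P), where s_r swaps X_r and X_{r+1}. Then T_r satisfies the quadratic relation (T_r - q)(T_r + 1) = 0 as an operator on k[X₁^{±1},...,X_d^{±1}]. -/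
/-!
Write `x = X_r` and `y = X_{r+1}`. Applying the involution `s` to the relation defining `T P`
gives a second relation, for `s (T P)`, with `x - y` replaced by `y - x`. Eliminating `s (T P)`
between it and the relations for `T P` and `T (T P)` leaves `(x - y)² (T² - (q - 1) T - q) P = 0`,
and `x - y` is not a zero divisor. On Laurent polynomials `s` is an involution because `s ∘ s`
fixes every `Xᵢ` and an algebra map out of a group algebra is determined by its values on
generators of the group.
-/

/-- The Laurent variable X_a in the Laurent polynomial ring
k[X₁^{±1},...,X_d^{±1}] = k[(Fin d → ℤ)]. -/
noncomputable def Xv (k : Type) [Field k] (d : ℕ) (a : Fin d) :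
    AddMonoidAlgebra k (Fin d → ℤ) :=
  AddMonoidAlgebra.single (Pi.single a 1) 1

open AddMonoidAlgebra

theorem AddMonoidAlgebra.algHom_ext_of_closure_eq_top {k G A : Type*} [CommSemiring k]
    [AddGroup G] [Semiring A] [Algebra k A] {S : Set G} (hS : AddSubgroup.closure S = ⊤)
    {φ₁ φ₂ : AddMonoidAlgebra k G →ₐ[k] A} (h : ∀ g ∈ S, φ₁ (single g 1) = φ₂ (single g 1)) :
    φ₁ = φ₂ := by
  have map_single_neg_mul (φ : AddMonoidAlgebra k G →ₐ[k] A) (g : G) :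
      φ (single (-g) 1) * φ (single g 1) = 1 := by
    rw [← map_mul, single_mul_single, neg_add_cancel, mul_one, ← one_def, map_one]
  have map_single_mul_neg (φ : AddMonoidAlgebra k G →ₐ[k] A) (g : G) :
      φ (single g 1) * φ (single (-g) 1) = 1 := by
    simpa using map_single_neg_mul φ (-g)
  refine algHom_ext (fun g ↦ ?_) (Subsingleton.elim _ _)
  induction (hS ▸ AddSubgroup.mem_top g : g ∈ AddSubgroup.closure S) using
    AddSubgroup.closure_induction with
  | mem g hg => exact h g hg
  | zero => rw [← one_def, map_one, map_one]
  | add g g' _ _ hg hg' => rw [← mul_one (1 : k), ← single_mul_single, map_mul, map_mul, hg, hg']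
  | neg g _ hg =>
    exact left_inv_eq_right_inv (hg ▸ map_single_neg_mul φ₁ g) (map_single_mul_neg φ₂ g)

theorem closure_range_piSingle_one (ι : Type*) [Fintype ι] [DecidableEq ι] :
    AddSubgroup.closure (Set.range fun i : ι ↦ (Pi.single i 1 : ι → ℤ)) = ⊤ := by
  refine (AddSubgroup.eq_top_iff' _).2 fun f ↦ ?_
  rw [← Finset.univ_sum_single f]
  refine AddSubgroup.sum_mem _ fun i _ ↦ ?_
  rw [← mul_one (f i), ← smul_eq_mul, Pi.single_smul]
  exact AddSubgroup.zsmul_mem _ (AddSubgroup.subset_closure (Set.mem_range_self i)) _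

theorem Xv_injective (k : Type) [Field k] (d : ℕ) : Function.Injective (Xv k d) := by
  intro a b hab
  by_contra hne
  simpa [hne] using congrFun (single_left_injective one_ne_zero hab) a

theorem involutive_of_map_Xv {k : Type} [Field k] {d : ℕ} {σ : Equiv.Perm (Fin d)}
    (hσ : Function.Involutive σ)
    {s : AddMonoidAlgebra k (Fin d → ℤ) →ₐ[k] AddMonoidAlgebra k (Fin d → ℤ)}
    (hs : ∀ a, s (Xv k d a) = Xv k d (σ a)) :
    Function.Involutive s := by
  suffices s.comp s = AlgHom.id k _ from fun P ↦ congrArg (· P) this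
  refine algHom_ext_of_closure_eq_top (closure_range_piSingle_one (Fin d)) ?_
  rintro _ ⟨a, rfl⟩
  change s (s (Xv k d a)) = Xv k d a
  rw [hs, hs, hσ]

theorem demazureLusztig_quadratic_relation {R A : Type*} [CommRing R] [CommRing A] [IsDomain A]
    [Algebra R A] (s : A →ₐ[R] A) (hs : Function.Involutive s) {x y : A} (hxy : x ≠ y)
    (hsx : s x = y) (q : R) (T : A → A)
    (hT : ∀ P, (x - y) * T P = q • ((x - y) * s P) + (q - 1) • (y * (s P - P))) (P : A) :
    T (T P) = (q - 1) • T P + q • P := by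
  have hsy : s y = x := hsx ▸ hs x
  have hsT : (y - x) * s (T P) = q • ((y - x) * P) + (q - 1) • (x * (P - s P)) := by
    simpa only [map_mul, map_add, map_smul, map_sub, hsx, hsy, hs P] using congrArg s (hT P)
  have hTT := hT (T P)
  have hTP := hT P
  simp only [Algebra.smul_def, map_sub, map_one] at hsT hTT hTP ⊢
  refine mul_left_cancel₀ (pow_ne_zero 2 (sub_ne_zero.2 hxy)) ?_
  set Q := algebraMap R A q
  linear_combination (x - y) * hTT - (Q * (x - y) + (Q - 1) * y) * hsT - (Q - 1) * x * hTP

theorem stmt14_general (k : Type) [Field k] (q : k)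
    (d : ℕ) (r r1 : Fin d) (hr : (r1 : ℕ) = (r : ℕ) + 1)
    (s : AddMonoidAlgebra k (Fin d → ℤ) →ₐ[k] AddMonoidAlgebra k (Fin d → ℤ))
    (hs : ∀ a : Fin d, s (Xv k d a) = Xv k d (Equiv.swap r r1 a))
    (T : AddMonoidAlgebra k (Fin d → ℤ) →ₗ[k] AddMonoidAlgebra k (Fin d → ℤ))
    (hT : ∀ P, (Xv k d r - Xv k d r1) * T P
        = q • ((Xv k d r - Xv k d r1) * s P) + (q - 1) • (Xv k d r1 * (s P - P))) :
    ∀ P, T (T P) = (q - 1) • T P + q • P := by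
  have hrr1 : r ≠ r1 := fun h ↦ by rw [h] at hr; omega
  have hsr : s (Xv k d r) = Xv k d r1 := by rw [hs, Equiv.swap_apply_left]
  exact demazureLusztig_quadratic_relation s (involutive_of_map_Xv (Equiv.swap_apply_self r r1) hs)
    ((Xv_injective k d).ne hrr1) hsr q T hT

/-- the operator T_r on Laurent polynomials, defined by
T_r(P) = q·s_r(P) + (q-1)·X_{r+1}(X_r - X_{r+1})⁻¹(s_r(P) - P) (equivalently by
the displayed multiplied identity, s_r being the algebra automorphism swapping
X_r and X_{r+1}), satisfies the quadratic relation (T_r - q)(T_r + 1) = 0. -/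
theorem stmt14 (k : Type) [Field k] (q : k) (hq0 : q ≠ 0) (hq1 : q ≠ 1)
    (d : ℕ) (r r1 : Fin d) (hr : (r1 : ℕ) = (r : ℕ) + 1)
    (s : AddMonoidAlgebra k (Fin d → ℤ) →ₐ[k] AddMonoidAlgebra k (Fin d → ℤ))
    (hs : ∀ a : Fin d, s (Xv k d a) = Xv k d (Equiv.swap r r1 a))
    (T : AddMonoidAlgebra k (Fin d → ℤ) →ₗ[k] AddMonoidAlgebra k (Fin d → ℤ))
    (hT : ∀ P, (Xv k d r - Xv k d r1) * T P
        = q • ((Xv k d r - Xv k d r1) * s P) + (q - 1) • (Xv k d r1 * (s P - P))) :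
    ∀ P, T (T P) = (q - 1) • T P + q • P :=
  stmt14_general k q d r r1 hr s hs T hT
end

section
/- Let w ∈ 𝔖_d and let j ∈ Ī^{ᾱ} be an unordered sequence and i = w(j) be well-ordered, where ᾱ = φ(α). Then there exists an index r ∈ [1,d̄] such that i_r ∈ Ī₁ and w⁻¹(r+1) < w⁻¹(r); consequently w has a reduced expression beginning with s_r, i.e. ℓ(s_r w) = ℓ(w) - 1. -/
/-!
Since `i` is well-ordered and every `i₁ ∈ I₁` occurs in it as often as its partner, the map
`r ↦ r + 1` is a bijection from the `Ī₁`-positions of `i` onto its `Ī₂`-positions: every `Ī₂`-entry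
is immediately preceded by an `Ī₁`-entry. If `w⁻¹` kept each such pair `r, r + 1` in order, the
predecessor map would inject the `Ī₂`-entries of every prefix of `j` into its `Ī₁`-entries,
contradicting unorderedness. Finally, a descent `w⁻¹(r + 1) < w⁻¹(r)` is an inversion
of `w` that `s_r` removes without touching any other, so `ℓ(s_r w) = ℓ(w) - 1`.
-/

/-- Membership in Ī₁. -/
def isB1 {I0 I1 : Type} : (I0 ⊕ I1 ⊕ I1) → Bool
  | Sum.inr (Sum.inl _) => true
  | _ => false

/-- Membership in Ī₂. -/
def isB2 {I0 I1 : Type} : (I0 ⊕ I1 ⊕ I1) → Bool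
  | Sum.inr (Sum.inr _) => true
  | _ => false

/-- The number of inversions of a permutation of Fin n (the Coxeter length). -/
def lenPerm {n : ℕ} (w : Equiv.Perm (Fin n)) : ℕ :=
  (Finset.univ.filter fun p : Fin n × Fin n => p.1 < p.2 ∧ w p.2 < w p.1).card

open Finset

lemma isB1_iff {I0 I1 : Type} (z : I0 ⊕ I1 ⊕ I1) :
    isB1 z = true ↔ ∃ i1 : I1, z = Sum.inr (Sum.inl i1) := by
  rcases z with _ | _ | _ <;> simp [isB1]

lemma isB2_iff {I0 I1 : Type} (z : I0 ⊕ I1 ⊕ I1) :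
    isB2 z = true ↔ ∃ i1 : I1, z = Sum.inr (Sum.inr i1) := by
  rcases z with _ | _ | _ <;> simp [isB2]

section Inversions

variable {n : ℕ}

def inversions (w : Equiv.Perm (Fin n)) : Finset (Fin n × Fin n) :=
  {p | p.1 < p.2 ∧ w p.2 < w p.1}

lemma lenPerm_eq_card_inversions (w : Equiv.Perm (Fin n)) : lenPerm w = #(inversions w) := rfl

lemma swap_lt_swap_iff {x y u v : Fin n} (hxy : y.val = x.val + 1) (hxy' : ¬(u = x ∧ v = y))
    (hyx : ¬(u = y ∧ v = x)) :
    Equiv.swap x y u < Equiv.swap x y v ↔ u < v := by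
  simp only [Equiv.swap_apply_def]
  split_ifs <;> simp only [Fin.lt_def, Fin.ext_iff] at * <;> omega

lemma mem_inversions {w : Equiv.Perm (Fin n)} {p : Fin n × Fin n} :
    p ∈ inversions w ↔ p.1 < p.2 ∧ w p.2 < w p.1 := by
  simp [inversions]

lemma inversions_eq_insert_inversions_swap_mul {w : Equiv.Perm (Fin n)} {x y : Fin n}
    (hxy : y.val = x.val + 1) (hdesc : w⁻¹ y < w⁻¹ x) :
    inversions w = insert (w⁻¹ y, w⁻¹ x) (inversions (Equiv.swap x y * w)) := by
  have hxy_lt : x < y := Fin.lt_def.2 (by omega)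
  ext ⟨p₁, p₂⟩
  simp only [mem_insert, mem_inversions, Prod.mk.injEq, Equiv.Perm.mul_apply]
  by_cases hp : p₁ = w⁻¹ y ∧ p₂ = w⁻¹ x
  · obtain ⟨rfl, rfl⟩ := hp
    exact iff_of_true ⟨hdesc, by simpa using hxy_lt⟩ (Or.inl ⟨rfl, rfl⟩)
  · simp only [hp, false_or]
    refine and_congr_right fun hlt => (swap_lt_swap_iff hxy ?_ ?_).symm
    · rintro ⟨h₂, h₁⟩
      exact hp ⟨by simp [← h₁], by simp [← h₂]⟩
    · rintro ⟨h₂, h₁⟩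
      rw [← Equiv.Perm.eq_inv_iff_eq.mpr h₁, ← Equiv.Perm.eq_inv_iff_eq.mpr h₂] at hdesc
      exact absurd (hlt.trans hdesc) (lt_irrefl _)

lemma lenPerm_swap_mul_add_one {w : Equiv.Perm (Fin n)} {x y : Fin n}
    (hxy : y.val = x.val + 1) (hdesc : w⁻¹ y < w⁻¹ x) :
    lenPerm (Equiv.swap x y * w) + 1 = lenPerm w := by
  rw [lenPerm_eq_card_inversions, lenPerm_eq_card_inversions,
    inversions_eq_insert_inversions_swap_mul hxy hdesc, card_insert_of_notMem]
  have hxy_lt : x < y := Fin.lt_def.2 (by omega)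
  simp [mem_inversions, hxy_lt.le]

end Inversions

section Pairing

variable {n : ℕ}

/-- The successor map is injective from the `b`-positions to the `c`-positions, hence onto. -/
lemma exists_pred_eq_of_forall_succ_eq {α : Type*} [DecidableEq α] (f : Fin n → α) {b c : α}
    (hcard : #{a | f a = c} ≤ #{a | f a = b})
    (hsucc : ∀ a, f a = b → ∃ h : a.val + 1 < n, f ⟨a.val + 1, h⟩ = c)
    {q : Fin n} (hq : f q = c) : ∃ p : Fin n, p.val + 1 = q.val ∧ f p = b := by
  have hsucc' : ∀ a ∈ ({a | f a = b} : Finset (Fin n)), ∃ h : a.val + 1 < n,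
      f ⟨a.val + 1, h⟩ = c := fun a ha => hsucc a (by simpa using ha)
  have hsurj := surj_on_of_inj_on_of_card_le
    (fun a ha => (⟨a.val + 1, (hsucc' a ha).1⟩ : Fin n))
    (fun a ha => by simpa using (hsucc' a ha).2)
    (fun a₁ a₂ _ _ h => Fin.ext (by simpa using h)) hcard
  obtain ⟨p, hp, hpq⟩ := hsurj q (by simpa using hq)
  exact ⟨p, by simp [hpq], by simpa using hp⟩

/-- Otherwise the predecessor map would inject the `B`-positions of the `σ`-prefix below `t`
into its `A`-positions. -/
lemma exists_succ_lt_of_card_filter_lt {β : Type*} [LinearOrder β] (σ : Fin n → β)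
    (A B : Fin n → Prop) [DecidablePred A] [DecidablePred B]
    (hpred : ∀ q, B q → ∃ p : Fin n, p.val + 1 = q.val ∧ A p) (t : β)
    (hlt : #{q | σ q < t ∧ A q} < #{q | σ q < t ∧ B q}) :
    ∃ (p : Fin n) (h : p.val + 1 < n), A p ∧ σ ⟨p.val + 1, h⟩ < σ p := by
  by_contra! hasc
  refine hlt.not_ge (card_le_card_of_injOn (fun q => ⟨q.val - 1, by omega⟩) ?_ ?_)
  · intro q hq
    simp only [mem_coe, mem_filter, mem_univ, true_and] at hq ⊢
    obtain ⟨p, hpq, hp⟩ := hpred q hq.2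
    have hp_succ : (⟨p.val + 1, hpq ▸ q.isLt⟩ : Fin n) = q := Fin.ext hpq
    rw [show (⟨q.val - 1, _⟩ : Fin n) = p from Fin.ext (by simp only; omega)]
    exact ⟨(hasc p _ hp).trans_lt (hp_succ ▸ hq.1), hp⟩
  · intro q hq q' hq' h
    obtain ⟨p, hpq, -⟩ := hpred q (mem_filter.1 hq).2.2
    obtain ⟨p', hpq', -⟩ := hpred q' (mem_filter.1 hq').2.2
    exact Fin.ext (by simp only [Fin.mk.injEq] at h; omega)

end Pairing

/-- let j ∈ Ī^{ᾱ} (ᾱ = φ(α), i.e. for each i ∈ I₁ the sequence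
has as many entries i¹ as i²) be unordered and let i = w(j) be well-ordered.
Then there is an index r with i_r ∈ Ī₁ and w⁻¹(r+1) < w⁻¹(r); consequently w
has a reduced expression beginning with s_r, i.e. ℓ(s_r w) = ℓ(w) - 1. -/
theorem stmt19 (I0 I1 : Type) [DecidableEq I0] [DecidableEq I1]
    (n : ℕ) (jseq iseq : Fin n → (I0 ⊕ I1 ⊕ I1)) (w : Equiv.Perm (Fin n))
    (hw : ∀ a, iseq (w a) = jseq a)
    (hcount : ∀ i1 : I1,
      (Finset.univ.filter fun a => iseq a = Sum.inr (Sum.inl i1)).card =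
      (Finset.univ.filter fun a => iseq a = Sum.inr (Sum.inr i1)).card)
    (hunord : ∃ r : ℕ,
      (Finset.univ.filter fun a : Fin n => a.val < r ∧ isB1 (jseq a) = true).card <
      (Finset.univ.filter fun a : Fin n => a.val < r ∧ isB2 (jseq a) = true).card)
    (hwo : ∀ (a : Fin n) (i1 : I1), iseq a = Sum.inr (Sum.inl i1) →
      ∃ h : a.val + 1 < n, iseq ⟨a.val + 1, h⟩ = Sum.inr (Sum.inr i1)) :
    ∃ (r : ℕ) (h1 : r + 1 < n) (i1 : I1),
      iseq ⟨r, by omega⟩ = Sum.inr (Sum.inl i1) ∧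
      w⁻¹ ⟨r + 1, h1⟩ < w⁻¹ ⟨r, by omega⟩ ∧
      lenPerm (Equiv.swap (⟨r, by omega⟩ : Fin n) ⟨r + 1, h1⟩ * w) + 1 = lenPerm w := by
  have hpartner : ∀ q, isB2 (iseq q) = true → ∃ p : Fin n, p.val + 1 = q.val ∧ isB1 (iseq p) := by
    intro q hq
    obtain ⟨i1, hi1⟩ := (isB2_iff _).1 hq
    obtain ⟨p, hpq, hp⟩ := exists_pred_eq_of_forall_succ_eq iseq (hcount i1).ge (hwo · i1) hi1
    exact ⟨p, hpq, (isB1_iff _).2 ⟨i1, hp⟩⟩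
  obtain ⟨m, hm⟩ := hunord
  have hprefix : ∀ P : (I0 ⊕ I1 ⊕ I1) → Bool, #{a | a.val < m ∧ P (jseq a)} =
      #{q | (w⁻¹ q).val < m ∧ P (iseq q)} := fun P => card_equiv w (by simp [hw])
  rw [hprefix, hprefix] at hm
  obtain ⟨p, h1, hp, hdesc⟩ :=
    exists_succ_lt_of_card_filter_lt (fun q => (w⁻¹ q).val) _ _ hpartner m hm
  obtain ⟨i1, hi1⟩ := (isB1_iff _).1 hp
  exact ⟨p.val, h1, i1, hi1, hdesc, lenPerm_swap_mul_add_one rfl hdesc⟩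
end
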